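/- Define the linear operator ℳ from gauge fields on T to functions on T by (ℳZ)(x) := −(τZ)(y,x) + L^{-3} Σ_{x'∈B(y)} (τZ)(y,x') for x ∈ B(y), y ∈ T'. If μ : T → ℝ satisfies Σ_{x∈B(y)} μ(x) = 0 for every y ∈ T', then ℳ(∂μ) = −μ. -/

import Mathlib

open Finset

noncomputable section

/-- Points of the discrete torus `(ℤ/Nℤ)³`. -/
abbrev TPt (N : ℕ) : Type := Fin 3 → ZMod N

/-- The standard unit vector `e_μ` in the torus. -/
def unitVec (N : ℕ) (μ : Fin 3) : TPt N := fun i => if i = μ then 1 else 0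

/-- The representative of `a ∈ ℤ/Nℤ` in the symmetric range `{-(N-1)/2, …, (N-1)/2}`
(for odd `N`). -/
def symRep (N : ℕ) (a : ZMod N) : ℤ :=
  if 2 * (a.val : ℤ) + 1 ≤ (N : ℤ) then (a.val : ℤ) else (a.val : ℤ) - (N : ℤ)

/-- Shift a torus point by `k` steps in direction `μ`. -/
def shiftT {N : ℕ} (z : TPt N) (μ : Fin 3) (k : ℤ) : TPt N :=
  fun i => if i = μ then z i + (k : ZMod N) else z i

/-- The sum of the gauge field `A` along the straight lattice path from `z` to `z + t·e_μ`. -/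
def segT {N : ℕ} (A : TPt N → TPt N → ℝ) (z : TPt N) (μ : Fin 3) (t : ℤ) : ℝ :=
  if 0 ≤ t then ∑ j ∈ Finset.range t.toNat, A (shiftT z μ (j : ℤ)) (shiftT z μ ((j : ℤ) + 1))
  else ∑ j ∈ Finset.range (-t).toNat, A (shiftT z μ (-(j : ℤ))) (shiftT z μ (-(j : ℤ) - 1))

/-- The field strength `dA` on the plaquette based at `x` spanned by `e_μ, e_ν`. -/
def plaqT {N : ℕ} (A : TPt N → TPt N → ℝ) (x : TPt N) (μ ν : Fin 3) : ℝ :=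
  A x (x + unitVec N μ) + A (x + unitVec N μ) (x + unitVec N μ + unitVec N ν)
    + A (x + unitVec N μ + unitVec N ν) (x + unitVec N ν) + A (x + unitVec N ν) x

/-- The corner of the rectilinear path `Γ^π_{yx}` reached after the first `m` coordinate
moves. -/
def interPtT {N : ℕ} (y x : TPt N) (π : Equiv.Perm (Fin 3)) (m : ℕ) : TPt N :=
  fun i => if ((π.symm i : Fin 3) : ℕ) < m then x i else y i

/-- `A(Γ^π_{yx})`: the sum of `A` along the rectilinear path (not wrapping around the
torus) from `y` to `x`, moving the coordinates to their final values in the order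
`π 0, π 1, π 2`; the coordinate increments are the symmetric representatives of `x - y`. -/
def gammaSumT {N : ℕ} (A : TPt N → TPt N → ℝ) (π : Equiv.Perm (Fin 3)) (y x : TPt N) : ℝ :=
  ∑ m : Fin 3, segT A (interPtT y x π (m : ℕ)) (π m) (symRep N (x (π m) - y (π m)))

/-- `(τA)(y,x) = (1/6) Σ_π A(Γ^π_{yx})`, averaged over the `3! = 6` permutations. -/
def tauBlk {N : ℕ} (A : TPt N → TPt N → ℝ) (y x : TPt N) : ℝ :=
  (1 / 6) * ∑ π : Equiv.Perm (Fin 3), gammaSumT A π y x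

/-- The block of radius `R` centered at `y`: all `x` whose coordinates relative to `y`
have symmetric representative of absolute value at most `R`. -/
def blockF (N : ℕ) [NeZero N] (R : ℤ) (y : TPt N) : Finset (TPt N) :=
  Finset.univ.filter fun x => ∀ i, |symRep N (x i - y i)| ≤ R

/-- Membership in the coarse lattice `(Lℤ/Nℤ)³ ⊆ (ℤ/Nℤ)³`. -/
def isCoarse (L N : ℕ) (y : TPt N) : Prop :=
  ∀ i, ∃ c : ZMod N, y i = (L : ZMod N) * c

/-- The coarse unit vector `L·e_μ`. -/
def cUnitVec (L N : ℕ) (μ : Fin 3) : TPt N := fun i => if i = μ then (L : ZMod N) else 0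

/-- The block-averaged field on coarse bonds:
`(QA)(y, y+Le_μ) = L⁻⁴ Σ_{x ∈ B(y)} A(Γ_{x,x+Le_μ})`. -/
def Qc (L : ℕ) {N : ℕ} [NeZero N] (A : TPt N → TPt N → ℝ) (y : TPt N) (μ : Fin 3) : ℝ :=
  ((L : ℝ) ^ 4)⁻¹ * ∑ x ∈ blockF N (((L : ℤ) - 1) / 2) y, segT A x μ (L : ℤ)

/-- The representative in `{-(L-1)/2, …, (L-1)/2}` of `a` modulo `L` (for odd `L`):
the offset of `a` from the nearest point of the coarse lattice `Lℤ/Nℤ`. -/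
def nearRes (L : ℕ) {N : ℕ} (a : ZMod N) : ℤ :=
  if 2 * ((a.val % L : ℕ) : ℤ) + 1 ≤ (L : ℤ) then ((a.val % L : ℕ) : ℤ)
  else ((a.val % L : ℕ) : ℤ) - (L : ℤ)

/-- The coarse site `y ∈ T'` whose block `B(y)` contains `x`. -/
def coarsePart (L : ℕ) {N : ℕ} (x : TPt N) : TPt N :=
  fun i => x i - ((nearRes L (x i) : ℤ) : ZMod N)

/-- The map `ℳ`: for `x ∈ B(y)`,
`(ℳZ)(x) = −(τZ)(y,x) + L⁻³ Σ_{x' ∈ B(y)} (τZ)(y,x')`. -/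
def Mmap (L : ℕ) {N : ℕ} [NeZero N] (Z : TPt N → TPt N → ℝ) (x : TPt N) : ℝ :=
  - tauBlk Z (coarsePart L x) x
    + ((L : ℝ) ^ 3)⁻¹ *
        ∑ x' ∈ blockF N (((L : ℤ) - 1) / 2) (coarsePart L x), tauBlk Z (coarsePart L x) x'

/-!
A gradient telescopes along every lattice path, so `τ(∂μ)(y, x) = μ x - μ y` whatever the
order of the coordinate moves. In `ℳ(∂μ)(x)` the constant `μ y` then cancels between the
two terms because the block `B(y)` has exactly `L³` points, leaving `-μ x` plus the block
average of `μ`, which vanishes by hypothesis.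
-/

section symRep

variable {N : ℕ} [NeZero N]

lemma intCast_symRep (a : ZMod N) : ((symRep N a : ℤ) : ZMod N) = a := by
  unfold symRep
  split_ifs <;> simp

lemma symRep_intCast {r : ℤ} (h₁ : 2 * r + 1 ≤ N) (h₂ : -(N : ℤ) ≤ 2 * r) :
    symRep N (r : ZMod N) = r := by
  have hN : 0 < (N : ℤ) := by exact_mod_cast NeZero.pos N
  unfold symRep
  rw [ZMod.val_intCast]
  rcases le_or_gt 0 r with hr | hr
  · rw [Int.emod_eq_of_lt hr (by omega), if_pos h₁]
  · have hmod : r % N = r + N := by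
      rw [← Int.add_emod_right, Int.emod_eq_of_lt (by omega) (by omega)]
    rw [hmod]
    split_ifs <;> omega

end symRep

lemma card_blockF {N : ℕ} [NeZero N] {R : ℤ} (hRN : 2 * R + 1 ≤ N) (y : TPt N) :
    #(blockF N R y) = (2 * R + 1).toNat ^ 3 := by
  have hbij : #(blockF N R y) = #(Fintype.piFinset fun _ : Fin 3 => Icc (-R) R) := by
    refine card_bij' (fun x _ j => symRep N (x j - y j)) (fun r _ j => y j + (r j : ZMod N))
      ?_ ?_ ?_ ?_
    · intro x hx
      simpa only [Fintype.mem_piFinset, mem_Icc, ← abs_le] using (mem_filter.mp hx).2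
    · intro r hr
      simp only [Fintype.mem_piFinset, mem_Icc] at hr
      refine mem_filter.mpr ⟨mem_univ _, fun i => ?_⟩
      have := hr i
      rw [add_sub_cancel_left, symRep_intCast (by omega) (by omega), abs_le]
      exact this
    · intro x _
      funext j
      rw [intCast_symRep, add_sub_cancel]
    · intro r hr
      funext j
      simp only [Fintype.mem_piFinset, mem_Icc] at hr
      have := hr j
      rw [add_sub_cancel_left, symRep_intCast (by omega) (by omega)]
  rw [hbij, Fintype.card_piFinset, prod_const, card_univ, Fintype.card_fin, Int.card_Icc]
  congr 2
  omega

lemma card_blockF_of_odd {L N : ℕ} [NeZero N] (hL : Odd L) (hLN : L ≤ N) (y : TPt N) :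
    #(blockF N (((L : ℤ) - 1) / 2) y) = L ^ 3 := by
  obtain ⟨k, rfl⟩ := hL
  rw [card_blockF (by push_cast at hLN ⊢; omega)]
  congr 1
  omega

lemma coarsePart_isCoarse (L : ℕ) {N : ℕ} [NeZero N] (x : TPt N) :
    isCoarse L N (coarsePart L x) := by
  intro i
  obtain ⟨q, hq⟩ : ∃ q : ℤ, ((x i).val : ℤ) - nearRes L (x i) = L * q := by
    have hdm := Nat.div_add_mod (x i).val L
    unfold nearRes
    split_ifs
    · exact ⟨((x i).val / L : ℕ), by omega⟩
    · exact ⟨((x i).val / L : ℕ) + 1, by rw [mul_add_one]; omega⟩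
  refine ⟨q, ?_⟩
  calc coarsePart L x i = ((((x i).val : ℤ) - nearRes L (x i) : ℤ) : ZMod N) := by
        simp [coarsePart]
    _ = (L : ZMod N) * (q : ZMod N) := by rw [hq]; push_cast; rfl

section gradient

variable {N : ℕ} (μ : TPt N → ℝ)

lemma shiftT_zero (z : TPt N) (d : Fin 3) : shiftT z d 0 = z := by
  funext i
  simp [shiftT]

lemma segT_gradient (z : TPt N) (d : Fin 3) (t : ℤ) :
    segT (fun a b => μ b - μ a) z d t = μ (shiftT z d t) - μ z := by
  unfold segT
  split_ifs with ht
  · have := sum_range_sub (fun j : ℕ => μ (shiftT z d j)) t.toNat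
    push_cast at this
    rw [this, Int.toNat_of_nonneg ht, shiftT_zero]
  · have := sum_range_sub (fun j : ℕ => μ (shiftT z d (-j))) (-t).toNat
    push_cast [neg_add', Int.toNat_of_nonneg (by omega : 0 ≤ -t)] at this
    rw [this, neg_neg, neg_zero, shiftT_zero]

lemma interPtT_zero (y x : TPt N) (π : Equiv.Perm (Fin 3)) : interPtT y x π 0 = y := by
  funext i
  simp [interPtT]

lemma interPtT_three (y x : TPt N) (π : Equiv.Perm (Fin 3)) : interPtT y x π 3 = x := by
  funext i
  simp [interPtT, (π.symm i).isLt]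

lemma shiftT_interPtT [NeZero N] (y x : TPt N) (π : Equiv.Perm (Fin 3)) (m : Fin 3) :
    shiftT (interPtT y x π m) (π m) (symRep N (x (π m) - y (π m)))
      = interPtT y x π (m + 1) := by
  funext i
  unfold shiftT interPtT
  by_cases hi : i = π m
  · subst hi
    simp [intCast_symRep]
  · have hne : ((π.symm i : Fin 3) : ℕ) ≠ m := fun h =>
      hi (by rw [← Fin.ext h, Equiv.apply_symm_apply])
    rw [if_neg hi]
    split_ifs <;> first | rfl | omega

lemma gammaSumT_gradient [NeZero N] (π : Equiv.Perm (Fin 3)) (y x : TPt N) :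
    gammaSumT (fun a b => μ b - μ a) π y x = μ x - μ y := by
  simp only [gammaSumT, Fin.sum_univ_three, segT_gradient, shiftT_interPtT]
  simp only [Fin.val_zero, Fin.val_one, Fin.val_two, Nat.reduceAdd, interPtT_zero,
    interPtT_three]
  ring

lemma tauBlk_gradient [NeZero N] (y x : TPt N) :
    tauBlk (fun a b => μ b - μ a) y x = μ x - μ y := by
  simp only [tauBlk, gammaSumT_gradient, sum_const, card_univ, Fintype.card_perm,
    Fintype.card_fin, nsmul_eq_mul]
  norm_num
  ring

lemma Mmap_gradient_apply [NeZero N] {L : ℕ} (hL : Odd L) (hLN : L ≤ N) (x : TPt N) :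
    Mmap L (fun a b => μ b - μ a) x
      = -μ x + ((L : ℝ) ^ 3)⁻¹ *
          ∑ x' ∈ blockF N (((L : ℤ) - 1) / 2) (coarsePart L x), μ x' := by
  have hL0 : (L : ℝ) ≠ 0 := by exact_mod_cast hL.pos.ne'
  simp only [Mmap, tauBlk_gradient, sum_sub_distrib, sum_const, card_blockF_of_odd hL hLN,
    nsmul_eq_mul, Nat.cast_pow]
  field_simp
  ring

end gradient

theorem Mmap_of_gradient_general (L M : ℕ) (hLodd : Odd L) (hM : 2 ≤ M)
    [NeZero (L ^ M)]
    (μ : TPt (L ^ M) → ℝ)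
    (hμ : ∀ y : TPt (L ^ M), isCoarse L (L ^ M) y →
      ∑ x ∈ blockF (L ^ M) (((L : ℤ) - 1) / 2) y, μ x = 0) :
    Mmap L (fun a b => μ b - μ a) = fun x => - μ x := by
  funext x
  rw [Mmap_gradient_apply μ hLodd (Nat.le_self_pow (by omega) L),
    hμ _ (coarsePart_isCoarse L x), mul_zero, add_zero]

/-- If `μ : T → ℝ` has zero average over every block `B(y)`, `y ∈ T'`,
then `ℳ(∂μ) = −μ`, where `(∂μ)(x,x') = μ(x') − μ(x)`. -/
theorem Mmap_of_gradient (L M : ℕ) (hL3 : 3 ≤ L) (hLodd : Odd L) (hM : 2 ≤ M)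
    [NeZero (L ^ M)]
    (μ : TPt (L ^ M) → ℝ)
    (hμ : ∀ y : TPt (L ^ M), isCoarse L (L ^ M) y →
      ∑ x ∈ blockF (L ^ M) (((L : ℤ) - 1) / 2) y, μ x = 0) :
    Mmap L (fun a b => μ b - μ a) = fun x => - μ x :=
  Mmap_of_gradient_general L M hLodd hM μ hμ
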